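/- Let X, Y, Z, M be random variables on a common probability space, each taking values in a finite set, with H(Z | (M, X)) = 0 and H(Z | (M, Y)) = 0. Then I(X ; M | Y) + I(Y ; M | X) = I(X ; Z | Y) + I(Y ; Z | X) + I((X, Z) ; M | (Y, Z)) + I((Y, Z) ; M | (X, Z)). -/
import Mathlib


open MeasureTheory ProbabilityTheory Real
open scoped ENNReal

/-- The probability that the random variable `X` takes the value `x`. -/
noncomputable def pm {Ω S : Type*} [MeasurableSpace Ω] (μ : Measure Ω) (X : Ω → S) (x : S) : ℝ :=
  (μ (X ⁻¹' {x})).toReal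

/-- Shannon entropy (with natural logarithm) of a finite-valued random variable. -/
noncomputable def entH {Ω S : Type*} [MeasurableSpace Ω] [Fintype S]
    (μ : Measure Ω) (X : Ω → S) : ℝ :=
  ∑ x : S, Real.negMulLog (pm μ X x)

/-- Conditional entropy `H(X | Y)`. -/
noncomputable def condEnt {Ω S T : Type*} [MeasurableSpace Ω] [Fintype S] [Fintype T]
    (μ : Measure Ω) (X : Ω → S) (Y : Ω → T) : ℝ :=
  entH μ (fun ω => (X ω, Y ω)) - entH μ Y

/-- Mutual information `I(X ; Y)`. -/
noncomputable def mutInf {Ω S T : Type*} [MeasurableSpace Ω] [Fintype S] [Fintype T]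
    (μ : Measure Ω) (X : Ω → S) (Y : Ω → T) : ℝ :=
  entH μ X + entH μ Y - entH μ (fun ω => (X ω, Y ω))

/-- Conditional mutual information `I(X ; Y | Z)`. -/
noncomputable def condMutInf {Ω S T U : Type*} [MeasurableSpace Ω] [Fintype S] [Fintype T]
    [Fintype U] (μ : Measure Ω) (X : Ω → S) (Y : Ω → T) (Z : Ω → U) : ℝ :=
  entH μ (fun ω => (X ω, Z ω)) + entH μ (fun ω => (Y ω, Z ω))
    - entH μ (fun ω => ((X ω, Y ω), Z ω)) - entH μ Z

section aux
variable {Ω : Type*} [MeasurableSpace Ω] (μ : Measure Ω) [IsProbabilityMeasure μ]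

lemma pm_nonneg {S : Type*} (X : Ω → S) (x : S) : 0 ≤ pm μ X x := ENNReal.toReal_nonneg

lemma entH_comp_inj {S T : Type*} [Fintype S] [Fintype T] (V : Ω → S) (g : S → T)
    (hg : Function.Injective g) : entH μ (fun ω => g (V ω)) = entH μ V := by
  classical
  have h1 : ∀ s : S, pm μ (fun ω => g (V ω)) (g s) = pm μ V s := by
    intro s
    have hs : (fun ω => g (V ω)) ⁻¹' {g s} = V ⁻¹' {s} := by
      ext ω; simp [hg.eq_iff]
    simp [pm, hs]
  unfold entH
  rw [show (∑ x : S, Real.negMulLog (pm μ V x))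
      = ∑ t ∈ Finset.univ.image g, Real.negMulLog (pm μ (fun ω => g (V ω)) t) by
    rw [Finset.sum_image (fun x _ y _ h => hg h)]
    exact Finset.sum_congr rfl (fun s _ => by rw [h1 s])]
  refine (Finset.sum_subset (Finset.subset_univ _) ?_).symm
  intro t _ ht
  have : (fun ω => g (V ω)) ⁻¹' {t} = ∅ := by
    ext ω
    simp only [Set.mem_preimage, Set.mem_singleton_iff, Set.mem_empty_iff_false, iff_false]
    intro h
    exact ht (Finset.mem_image.2 ⟨V ω, Finset.mem_univ _, h⟩)
  simp [pm, this]

lemma pm_sum {A B : Type*} [Fintype A]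
    [MeasurableSpace A] [MeasurableSingletonClass A]
    [MeasurableSpace B] [MeasurableSingletonClass B]
    (Z : Ω → A) (V : Ω → B) (hZ : Measurable Z) (hV : Measurable V) (v : B) :
    pm μ V v = ∑ z : A, pm μ (fun ω => (Z ω, V ω)) (z, v) := by
  unfold pm
  rw [← ENNReal.toReal_sum (fun z _ => measure_ne_top μ _)]
  congr 1
  have h1 : V ⁻¹' {v} = ⋃ z : A, (fun ω => (Z ω, V ω)) ⁻¹' {(z, v)} := by
    ext ω
    simp [Prod.ext_iff]
  rw [h1, measure_iUnion ?_ ?_, tsum_fintype]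
  · intro z z' hzz'
    simp only [Function.onFun, Set.disjoint_left]
    intro ω h h'
    simp only [Set.mem_preimage, Set.mem_singleton_iff, Prod.ext_iff] at h h'
    exact hzz' (h.1.symm.trans h'.1)
  · intro z
    have : (fun ω => (Z ω, V ω)) ⁻¹' {(z, v)} = Z ⁻¹' {z} ∩ V ⁻¹' {v} := by
      ext ω; simp [Prod.ext_iff]
    rw [this]
    exact (hZ (measurableSet_singleton z)).inter (hV (measurableSet_singleton v))

lemma pm_mono {A B : Type*} (X1 : Ω → A) (X2 : Ω → B) (a : A) (b : B)
    (h : X1 ⁻¹' {a} ⊆ X2 ⁻¹' {b}) : pm μ X1 a ≤ pm μ X2 b :=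
  ENNReal.toReal_mono (measure_ne_top μ _) (measure_mono h)

end aux

section real
open Finset
variable {ι : Type*}

lemma term_nonneg (s : Finset ι) (f : ι → ℝ) (hf : ∀ i ∈ s, 0 ≤ f i) (i : ι) (hi : i ∈ s) :
    0 ≤ f i * (Real.log (∑ j ∈ s, f j) - Real.log (f i)) := by
  rcases eq_or_lt_of_le (hf i hi) with h | h
  · simp [← h]
  · refine mul_nonneg h.le (sub_nonneg.2 (Real.log_le_log h ?_))
    exact Finset.single_le_sum hf hi

lemma sum_negMulLog_sub (s : Finset ι) (f : ι → ℝ) :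
    (∑ i ∈ s, Real.negMulLog (f i)) - Real.negMulLog (∑ i ∈ s, f i)
      = ∑ i ∈ s, f i * (Real.log (∑ j ∈ s, f j) - Real.log (f i)) := by
  rw [Real.negMulLog, neg_mul, sub_neg_eq_add, Finset.sum_mul]
  rw [← Finset.sum_add_distrib]
  refine Finset.sum_congr rfl (fun i _ => ?_)
  rw [Real.negMulLog]
  ring

lemma negMulLog_sum_le (s : Finset ι) (f : ι → ℝ) (hf : ∀ i ∈ s, 0 ≤ f i) :
    Real.negMulLog (∑ i ∈ s, f i) ≤ ∑ i ∈ s, Real.negMulLog (f i) := by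
  have := sum_negMulLog_sub s f
  have h2 : 0 ≤ ∑ i ∈ s, f i * (Real.log (∑ j ∈ s, f j) - Real.log (f i)) :=
    Finset.sum_nonneg (fun i hi => term_nonneg s f hf i hi)
  linarith

lemma negMulLog_sum_eq_unique (s : Finset ι) (f : ι → ℝ) (hf : ∀ i ∈ s, 0 ≤ f i)
    (heq : (∑ i ∈ s, Real.negMulLog (f i)) = Real.negMulLog (∑ i ∈ s, f i)) :
    ∀ i ∈ s, ∀ j ∈ s, f i ≠ 0 → f j ≠ 0 → i = j := by
  classical
  have h0 : ∑ i ∈ s, f i * (Real.log (∑ j ∈ s, f j) - Real.log (f i)) = 0 := by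
    have := sum_negMulLog_sub s f; linarith
  have hterm : ∀ i ∈ s, f i * (Real.log (∑ j ∈ s, f j) - Real.log (f i)) = 0 :=
    (Finset.sum_eq_zero_iff_of_nonneg (fun i hi => term_nonneg s f hf i hi)).1 h0
  have hfull : ∀ i ∈ s, f i ≠ 0 → f i = ∑ j ∈ s, f j := by
    intro i hi hne
    have hpos : 0 < f i := lt_of_le_of_ne (hf i hi) (Ne.symm hne)
    have hS : 0 < ∑ j ∈ s, f j := lt_of_lt_of_le hpos (Finset.single_le_sum hf hi)
    have := hterm i hi
    rcases mul_eq_zero.1 this with h | h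
    · exact absurd h hne
    · have hlog : Real.log (f i) = Real.log (∑ j ∈ s, f j) := by linarith
      exact Real.log_injOn_pos (Set.mem_Ioi.2 hpos) (Set.mem_Ioi.2 hS) hlog
  intro i hi j hj hfi hfj
  by_contra hij
  have hposi : 0 < f i := lt_of_le_of_ne (hf i hi) (Ne.symm hfi)
  have hposj : 0 < f j := lt_of_le_of_ne (hf j hj) (Ne.symm hfj)
  have hsum : f i + f j ≤ ∑ k ∈ s, f k := by
    have hsub : {i, j} ⊆ s := by
      intro k hk
      rcases Finset.mem_insert.1 hk with h | h
      · exact h ▸ hi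
      · exact (Finset.mem_singleton.1 h) ▸ hj
    calc f i + f j = ∑ k ∈ ({i, j} : Finset ι), f k := by
          rw [Finset.sum_insert (by simp [hij]), Finset.sum_singleton]
      _ ≤ ∑ k ∈ s, f k := Finset.sum_le_sum_of_subset_of_nonneg hsub
          (fun k hk _ => hf k hk)
  have := hfull i hi hfi
  have := hfull j hj hfj
  linarith

lemma sum_negMulLog_of_unique [Fintype ι] (f : ι → ℝ)
    (h : ∀ i j, f i ≠ 0 → f j ≠ 0 → i = j) :
    ∑ i, Real.negMulLog (f i) = Real.negMulLog (∑ i, f i) := by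
  by_cases hz : ∀ i, f i = 0
  · simp [hz]
  · push_neg at hz
    obtain ⟨i0, hi0⟩ := hz
    rw [Finset.sum_eq_single i0 (fun j _ hj => by
        by_cases hfj : f j = 0
        · simp [hfj]
        · exact absurd (h j i0 hfj hi0) hj) (fun h => absurd (Finset.mem_univ i0) h),
      Finset.sum_eq_single i0 (fun j _ hj => by
        by_cases hfj : f j = 0
        · exact hfj
        · exact absurd (h j i0 hfj hi0) hj) (fun h => absurd (Finset.mem_univ i0) h)]

end real

section det
variable {Ω : Type*} [MeasurableSpace Ω] (μ : Measure Ω) [IsProbabilityMeasure μ]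

lemma uniq_of_condEnt_zero {A B : Type*} [Fintype A] [Fintype B]
    [MeasurableSpace A] [MeasurableSingletonClass A]
    [MeasurableSpace B] [MeasurableSingletonClass B]
    (Z : Ω → A) (W : Ω → B) (hZ : Measurable Z) (hW : Measurable W)
    (h : condEnt μ Z W = 0) :
    ∀ (w : B) (z z' : A), pm μ (fun ω => (Z ω, W ω)) (z, w) ≠ 0 →
      pm μ (fun ω => (Z ω, W ω)) (z', w) ≠ 0 → z = z' := by
  have hZW : entH μ (fun ω => (Z ω, W ω)) = entH μ W := by
    have := h; unfold condEnt at this; linarith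
  have hrw : entH μ (fun ω => (Z ω, W ω))
      = ∑ w : B, ∑ z : A, Real.negMulLog (pm μ (fun ω => (Z ω, W ω)) (z, w)) := by
    rw [entH, Fintype.sum_prod_type]
    exact Finset.sum_comm
  have hW' : entH μ W
      = ∑ w : B, Real.negMulLog (∑ z : A, pm μ (fun ω => (Z ω, W ω)) (z, w)) := by
    rw [entH]
    exact Finset.sum_congr rfl (fun w _ => by rw [← pm_sum μ Z W hZ hW w])
  have hzero : ∑ w : B, ((∑ z : A, Real.negMulLog (pm μ (fun ω => (Z ω, W ω)) (z, w)))
      - Real.negMulLog (∑ z : A, pm μ (fun ω => (Z ω, W ω)) (z, w))) = 0 := by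
    rw [Finset.sum_sub_distrib, ← hrw, ← hW', hZW, sub_self]
  have heach := (Finset.sum_eq_zero_iff_of_nonneg (fun w _ => sub_nonneg.2
      (negMulLog_sum_le Finset.univ (fun z => pm μ (fun ω => (Z ω, W ω)) (z, w))
        (fun z _ => pm_nonneg μ _ _)))).1 hzero
  intro w z z' hz hz'
  have hw := heach w (Finset.mem_univ w)
  have heqw : (∑ z : A, Real.negMulLog (pm μ (fun ω => (Z ω, W ω)) (z, w)))
      = Real.negMulLog (∑ z : A, pm μ (fun ω => (Z ω, W ω)) (z, w)) := by linarith
  exact negMulLog_sum_eq_unique Finset.univ _ (fun z _ => pm_nonneg μ _ _) heqw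
    z (Finset.mem_univ z) z' (Finset.mem_univ z') hz hz'

lemma entH_pair_of_det {A B C : Type*} [Fintype A] [Fintype B]
    [MeasurableSpace A] [MeasurableSingletonClass A]
    [MeasurableSpace B] [MeasurableSingletonClass B]
    (Z : Ω → A) (V : Ω → B) (W : Ω → C) (f : B → C)
    (hZ : Measurable Z) (hV : Measurable V)
    (hfW : ∀ ω, W ω = f (V ω))
    (huniq : ∀ (w : C) (z z' : A), pm μ (fun ω => (Z ω, W ω)) (z, w) ≠ 0 →
      pm μ (fun ω => (Z ω, W ω)) (z', w) ≠ 0 → z = z') :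
    entH μ (fun ω => (Z ω, V ω)) = entH μ V := by
  have key : ∀ v : B, ∀ z z' : A, pm μ (fun ω => (Z ω, V ω)) (z, v) ≠ 0 →
      pm μ (fun ω => (Z ω, V ω)) (z', v) ≠ 0 → z = z' := by
    intro v z z' hz hz'
    have hle : ∀ z : A, pm μ (fun ω => (Z ω, V ω)) (z, v)
        ≤ pm μ (fun ω => (Z ω, W ω)) (z, f v) := by
      intro z
      refine pm_mono μ _ _ _ _ ?_
      intro ω hω
      simp only [Set.mem_preimage, Set.mem_singleton_iff, Prod.ext_iff] at hω ⊢
      exact ⟨hω.1, by rw [hfW ω, hω.2]⟩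
    have h1 : pm μ (fun ω => (Z ω, W ω)) (z, f v) ≠ 0 := by
      intro h0
      have h := hle z
      rw [h0] at h
      exact hz (le_antisymm h (pm_nonneg μ _ _))
    have h2 : pm μ (fun ω => (Z ω, W ω)) (z', f v) ≠ 0 := by
      intro h0
      have h := hle z'
      rw [h0] at h
      exact hz' (le_antisymm h (pm_nonneg μ _ _))
    exact huniq (f v) z z' h1 h2
  have hrw : entH μ (fun ω => (Z ω, V ω))
      = ∑ v : B, ∑ z : A, Real.negMulLog (pm μ (fun ω => (Z ω, V ω)) (z, v)) := by
    rw [entH, Fintype.sum_prod_type]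
    exact Finset.sum_comm
  rw [hrw, entH]
  refine Finset.sum_congr rfl (fun v _ => ?_)
  rw [sum_negMulLog_of_unique _ (fun z z' => key v z z'), ← pm_sum μ Z V hZ hV v]

end det

/-- If `H(Z | (M,X)) = 0` and `H(Z | (M,Y)) = 0`, then
`I(X ; M | Y) + I(Y ; M | X)
  = I(X ; Z | Y) + I(Y ; Z | X) + I((X,Z) ; M | (Y,Z)) + I((Y,Z) ; M | (X,Z))`. -/
theorem information_cost_decomposition
    {Ω : Type*} [MeasurableSpace Ω] (μ : Measure Ω) [IsProbabilityMeasure μ]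
    {S T W U : Type*} [Fintype S] [Fintype T] [Fintype W] [Fintype U]
    [MeasurableSpace S] [MeasurableSingletonClass S]
    [MeasurableSpace T] [MeasurableSingletonClass T]
    [MeasurableSpace W] [MeasurableSingletonClass W]
    [MeasurableSpace U] [MeasurableSingletonClass U]
    (X : Ω → S) (Y : Ω → T) (Z : Ω → W) (M : Ω → U)
    (hX : Measurable X) (hY : Measurable Y) (hZ : Measurable Z) (hM : Measurable M)
    (hZX : condEnt μ Z (fun ω => (M ω, X ω)) = 0)
    (hZY : condEnt μ Z (fun ω => (M ω, Y ω)) = 0) :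
    condMutInf μ X M Y + condMutInf μ Y M X
      = condMutInf μ X Z Y + condMutInf μ Y Z X
        + condMutInf μ (fun ω => (X ω, Z ω)) M (fun ω => (Y ω, Z ω))
        + condMutInf μ (fun ω => (Y ω, Z ω)) M (fun ω => (X ω, Z ω)) := by
  -- reorderings to canonical forms
  have h1 : entH μ (fun ω => (Y ω, X ω)) = entH μ (fun ω => (X ω, Y ω)) :=
    entH_comp_inj μ (fun ω => (X ω, Y ω)) (fun p => (p.2, p.1))
      (fun a b h => by simpa [Prod.ext_iff, and_comm] using h)
  have h2 : entH μ (fun ω => ((Y ω, M ω), X ω)) = entH μ (fun ω => ((X ω, M ω), Y ω)) :=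
    entH_comp_inj μ (fun ω => ((X ω, M ω), Y ω)) (fun p => ((p.2, p.1.2), p.1.1))
      (fun a b h => by simp only [Prod.ext_iff] at h ⊢; tauto)
  have h3 : entH μ (fun ω => (Z ω, Y ω)) = entH μ (fun ω => (Y ω, Z ω)) :=
    entH_comp_inj μ (fun ω => (Y ω, Z ω)) (fun p => (p.2, p.1))
      (fun a b h => by simpa [Prod.ext_iff, and_comm] using h)
  have h4 : entH μ (fun ω => (Z ω, X ω)) = entH μ (fun ω => (X ω, Z ω)) :=
    entH_comp_inj μ (fun ω => (X ω, Z ω)) (fun p => (p.2, p.1))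
      (fun a b h => by simpa [Prod.ext_iff, and_comm] using h)
  have h6 : entH μ (fun ω => ((Y ω, Z ω), X ω)) = entH μ (fun ω => ((X ω, Z ω), Y ω)) :=
    entH_comp_inj μ (fun ω => ((X ω, Z ω), Y ω)) (fun p => ((p.2, p.1.2), p.1.1))
      (fun a b h => by simp only [Prod.ext_iff] at h ⊢; tauto)
  have h7 : entH μ (fun ω => ((X ω, Z ω), (Y ω, Z ω))) = entH μ (fun ω => ((X ω, Z ω), Y ω)) :=
    entH_comp_inj μ (fun ω => ((X ω, Z ω), Y ω)) (fun p => (p.1, (p.2, p.1.2)))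
      (fun a b h => by simp only [Prod.ext_iff] at h ⊢; tauto)
  have h8 : entH μ (fun ω => ((Y ω, Z ω), (X ω, Z ω))) = entH μ (fun ω => ((X ω, Z ω), Y ω)) :=
    entH_comp_inj μ (fun ω => ((X ω, Z ω), Y ω)) (fun p => ((p.2, p.1.2), p.1))
      (fun a b h => by simp only [Prod.ext_iff] at h ⊢; tauto)
  -- the conditional-entropy hypotheses as entropy equalities
  have hzx : entH μ (fun ω => (Z ω, (M ω, X ω))) = entH μ (fun ω => (M ω, X ω)) := by
    unfold condEnt at hZX; linarith
  have hzy : entH μ (fun ω => (Z ω, (M ω, Y ω))) = entH μ (fun ω => (M ω, Y ω)) := by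
    unfold condEnt at hZY; linarith
  have h9 : entH μ (fun ω => (M ω, (Y ω, Z ω))) = entH μ (fun ω => (M ω, Y ω)) := by
    rw [← hzy]
    exact entH_comp_inj μ (fun ω => (Z ω, (M ω, Y ω))) (fun p => (p.2.1, (p.2.2, p.1)))
      (fun a b h => by simp only [Prod.ext_iff] at h ⊢; tauto)
  have h10 : entH μ (fun ω => (M ω, (X ω, Z ω))) = entH μ (fun ω => (M ω, X ω)) := by
    rw [← hzx]
    exact entH_comp_inj μ (fun ω => (Z ω, (M ω, X ω))) (fun p => (p.2.1, (p.2.2, p.1)))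
      (fun a b h => by simp only [Prod.ext_iff] at h ⊢; tauto)
  -- determinism: H(X,Y,Z,M) = H(X,Y,M)
  have hK : entH μ (fun ω => (Z ω, ((X ω, M ω), Y ω))) = entH μ (fun ω => ((X ω, M ω), Y ω)) := by
    refine entH_pair_of_det μ Z (fun ω => ((X ω, M ω), Y ω)) (fun ω => (M ω, X ω))
      (fun p => (p.1.2, p.1.1)) hZ (((hX.prodMk hM)).prodMk hY) (fun ω => rfl) ?_
    exact uniq_of_condEnt_zero μ Z (fun ω => (M ω, X ω)) hZ (hM.prodMk hX) hZX
  have h11 : entH μ (fun ω => (((X ω, Z ω), M ω), (Y ω, Z ω)))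
      = entH μ (fun ω => ((X ω, M ω), Y ω)) := by
    rw [← hK]
    exact entH_comp_inj μ (fun ω => (Z ω, ((X ω, M ω), Y ω)))
      (fun p => (((p.2.1.1, p.1), p.2.1.2), (p.2.2, p.1)))
      (fun a b h => by simp only [Prod.ext_iff] at h ⊢; tauto)
  have h12 : entH μ (fun ω => (((Y ω, Z ω), M ω), (X ω, Z ω)))
      = entH μ (fun ω => ((X ω, M ω), Y ω)) := by
    rw [← hK]
    exact entH_comp_inj μ (fun ω => (Z ω, ((X ω, M ω), Y ω)))
      (fun p => (((p.2.2, p.1), p.2.1.2), (p.2.1.1, p.1)))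
      (fun a b h => by simp only [Prod.ext_iff] at h ⊢; tauto)
  simp only [condMutInf]
  rw [h1, h2, h3, h4, h6, h7, h8, h9, h10, h11, h12]
  ring
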